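/- arXiv:1702.01524 — 6 statements merged into one kernel-verified Lean document; each statement's English description precedes it below -/
import Mathlib

section
/- Let P = v_0 v_1 ⋯ v_n be a taut path in G, with edges e_i = v_{i−1}v_i for 1 ≤ i ≤ n, and let ℓ_i = L(e_i) denote their edge levels. Then for every index i with 2 ≤ i ≤ n−1, if ℓ_i is finite, then ℓ_{i−1} < ℓ_i or ℓ_{i+1} < ℓ_i. -/
open SimpleGraph

variable {V : Type*}

/-- The set of levels (under `L`) of taut neighbours of edge `e` at vertex `v`:
edges `f` of `G` incident to `v` such that the turn from `e` to `f` at `v` is taut. -/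
def tautNbrLevels (G : SimpleGraph V) (taut : V → Sym2 V → Sym2 V → Prop)
    (L : Sym2 V → ℕ∞) (v : V) (e : Sym2 V) : Set ℕ∞ :=
  {n | ∃ f ∈ G.edgeSet, v ∈ f ∧ taut v e f ∧ n = L f}

/-- The monotone operator on `E → ℕ∞` whose least fixed point defines edge levels:
`(levelOp L) e = 1 + min over the endpoints v of e of sup {L f : f taut neighbour of e at v}`
(with `sSup ∅ = 0`). -/
noncomputable def levelOp (G : SimpleGraph V) (taut : V → Sym2 V → Sym2 V → Prop)
    (L : Sym2 V → ℕ∞) (e : Sym2 V) : ℕ∞ :=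
  1 + ⨅ v ∈ e, sSup (tautNbrLevels G taut L v e)

/-- `L` is the edge-level function: the pointwise least fixed point (on edges of `G`)
of the level operator. -/
def IsEdgeLevel (G : SimpleGraph V) (taut : V → Sym2 V → Sym2 V → Prop)
    (L : Sym2 V → ℕ∞) : Prop :=
  (∀ e ∈ G.edgeSet, L e = levelOp G taut L e) ∧
  ∀ L' : Sym2 V → ℕ∞, (∀ e ∈ G.edgeSet, L' e = levelOp G taut L' e) →
    ∀ e ∈ G.edgeSet, L e ≤ L' e

/-- `p 0, p 1, …, p n` is a taut path in `G`: a walk of length `n ≥ 1` such that at every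
interior vertex `p i` (`1 ≤ i ≤ n-1`), the turn from edge `p (i-1) p i` to edge
`p i p (i+1)` is taut. -/
def IsTautPath (G : SimpleGraph V) (taut : V → Sym2 V → Sym2 V → Prop)
    (n : ℕ) (p : ℕ → V) : Prop :=
  1 ≤ n ∧ (∀ i < n, G.Adj (p i) (p (i + 1))) ∧
  ∀ i, 1 ≤ i → i < n → taut (p i) s(p (i - 1), p i) s(p i, p (i + 1))

/-- Lemma (taut path interior levels): along a taut path `p 0 … p n` with edges
`e_i = p (i-1) p i` and levels `ℓ_i = L e_i`, for every `2 ≤ i ≤ n - 1`, if `ℓ i` is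
finite then `ℓ (i-1) < ℓ i` or `ℓ (i+1) < ℓ i`. -/
theorem taut_path_interior_level_decrease
    [Fintype V] (G : SimpleGraph V)
    (taut : V → Sym2 V → Sym2 V → Prop)
    (taut_symm : ∀ v e f, taut v e f → taut v f e)
    (L : Sym2 V → ℕ∞) (hL : IsEdgeLevel G taut L)
    (n : ℕ) (p : ℕ → V) (hp : IsTautPath G taut n p)
    (ℓ : ℕ → ℕ∞) (hℓ : ∀ i, ℓ i = L s(p (i - 1), p i)) :
    ∀ i, 2 ≤ i → i + 1 ≤ n → ℓ i < ⊤ → ℓ (i - 1) < ℓ i ∨ ℓ (i + 1) < ℓ i := by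
  obtain ⟨hn, hadj, htaut⟩ := hp
  intro i hi2 hin hfin
  have hib : (i - 1) + 1 = i := by omega
  have hadj_e : G.Adj (p (i-1)) (p i) := by
    have := hadj (i-1) (by omega); rwa [hib] at this
  have he : s(p (i-1), p i) ∈ G.edgeSet := hadj_e
  have heq := hL.1 _ he
  set Sa := sSup (tautNbrLevels G taut L (p (i-1)) s(p (i-1), p i)) with hSa
  set Sb := sSup (tautNbrLevels G taut L (p i) s(p (i-1), p i)) with hSb
  have hinf : (⨅ v ∈ s(p (i-1), p i), sSup (tautNbrLevels G taut L v s(p (i-1), p i)))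
      = min Sa Sb := by
    apply le_antisymm
    · exact le_min (iInf₂_le _ (Sym2.mem_mk_left _ _)) (iInf₂_le _ (Sym2.mem_mk_right _ _))
    · refine le_iInf₂ fun v hv => ?_
      rcases Sym2.mem_iff.mp hv with rfl | rfl
      · exact min_le_left _ _
      · exact min_le_right _ _
  rw [levelOp, hinf] at heq
  rw [hℓ i] at hfin ⊢
  have hmfin : min Sa Sb ≠ ⊤ := by
    intro h
    rw [h] at heq
    simp [heq] at hfin
  have key : ∀ m : ℕ∞, m ≤ min Sa Sb → m < L s(p (i-1), p i) := by
    intro m hm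
    rw [heq]
    calc m ≤ min Sa Sb := hm
      _ < 1 + min Sa Sb := by
        rw [add_comm]
        exact ENat.lt_add_one_iff hmfin |>.mpr le_rfl
  rcases min_cases Sa Sb with ⟨hmin, _⟩ | ⟨hmin, _⟩
  · left
    have h1 : i - 1 - 1 = i - 2 := by omega
    have h2 : (i - 2) + 1 = i - 1 := by omega
    have hadjprev : G.Adj (p (i-2)) (p (i-1)) := by
      have := hadj (i-2) (by omega); rwa [h2] at this
    have htaut' : taut (p (i-1)) s(p (i-2), p (i-1)) s(p (i-1), p i) := by
      have := htaut (i-1) (by omega) (by omega)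
      rwa [h1, hib] at this
    have hmem : L s(p (i-2), p (i-1)) ∈ tautNbrLevels G taut L (p (i-1)) s(p (i-1), p i) :=
      ⟨s(p (i-2), p (i-1)), hadjprev, Sym2.mem_mk_right _ _, taut_symm _ _ _ htaut', rfl⟩
    have hle : L s(p (i-2), p (i-1)) ≤ Sa := le_sSup hmem
    rw [hℓ (i-1), h1]
    exact key _ (by rw [hmin]; exact hle)
  · right
    have h3 : (i + 1) - 1 = i := by omega
    have hadjnext : G.Adj (p i) (p (i+1)) := hadj i (by omega)
    have htaut' : taut (p i) s(p (i-1), p i) s(p i, p (i+1)) :=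
      htaut i (by omega) (by omega)
    have hmem : L s(p i, p (i+1)) ∈ tautNbrLevels G taut L (p i) s(p (i-1), p i) :=
      ⟨s(p i, p (i+1)), hadjnext, Sym2.mem_mk_left _ _, htaut', rfl⟩
    have hle : L s(p i, p (i+1)) ≤ Sb := le_sSup hmem
    rw [hℓ (i+1), h3]
    exact key _ (by rw [hmin]; exact hle)
end

section
/- Let P = v_0 v_1 ⋯ v_n be a taut path in G, with edges e_i = v_{i−1}v_i for 1 ≤ i ≤ n, and let ℓ_i = L(e_i). Then for every index i with 1 ≤ i ≤ n−2, if ℓ_i ≥ ℓ_{i+1} and ℓ_{i+1} is finite, then ℓ_{i+1} > ℓ_{i+2}. -/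
/-! At a finite-level edge `e = s(u, w)` the fixed-point equation reads
`L e = 1 + min (S u) (S w)`, where `S v` is the supremum of the levels of the taut neighbours
of `e` at `v`. Finiteness makes the minimum strictly smaller than `L e`; a taut neighbour at `u`
of level `≥ L e` shows it is not attained at `u`, so it is `S w`, and every taut neighbour at `w`
has level `≤ S w < L e`. Along a taut path, the edges before and after `e` are such neighbours. -/

open SimpleGraph

variable {V : Type*}

theorem ENat.lt_of_eq_one_add_inf {x a b : ℕ∞} (hx : x = 1 + a ⊓ b) (hx_top : x ≠ ⊤)
    (hxa : x ≤ a) : b < x := by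
  have hinf_top : a ⊓ b ≠ ⊤ := by rintro h; simp [hx, h] at hx_top
  have hinf_lt : a ⊓ b < x := by
    rw [hx, add_comm]; exact (ENat.add_one_le_iff hinf_top).mp le_rfl
  exact (min_lt_iff.mp hinf_lt).resolve_left hxa.not_gt

theorem Sym2.iInf_mem_mk {α β : Type*} [CompleteLattice β] (f : α → β) (a b : α) :
    ⨅ v ∈ s(a, b), f v = f a ⊓ f b := by
  simp only [Sym2.mem_iff, iInf_or, iInf_inf_eq, iInf_iInf_eq_left]

section Levels

variable {G : SimpleGraph V} {taut : V → Sym2 V → Sym2 V → Prop} {L : Sym2 V → ℕ∞}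

theorem le_sSup_tautNbrLevels {v : V} {e f : Sym2 V} (hf : f ∈ G.edgeSet) (hvf : v ∈ f)
    (htaut : taut v e f) : L f ≤ sSup (tautNbrLevels G taut L v e) :=
  le_sSup ⟨f, hf, hvf, htaut, rfl⟩

theorem levelOp_mk (u w : V) :
    levelOp G taut L s(u, w) =
      1 + sSup (tautNbrLevels G taut L u s(u, w)) ⊓ sSup (tautNbrLevels G taut L w s(u, w)) :=
  congrArg (1 + ·) (Sym2.iInf_mem_mk _ u w)

theorem level_lt_of_taut_turns {u w : V} {f g : Sym2 V}
    (hfix : L s(u, w) = levelOp G taut L s(u, w)) (hL_top : L s(u, w) ≠ ⊤)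
    (hf : f ∈ G.edgeSet) (huf : u ∈ f) (htaut_f : taut u s(u, w) f) (hle : L s(u, w) ≤ L f)
    (hg : g ∈ G.edgeSet) (hwg : w ∈ g) (htaut_g : taut w s(u, w) g) :
    L g < L s(u, w) :=
  (le_sSup_tautNbrLevels hg hwg htaut_g).trans_lt <|
    ENat.lt_of_eq_one_add_inf (hfix.trans (levelOp_mk u w)) hL_top
      (hle.trans (le_sSup_tautNbrLevels hf huf htaut_f))

end Levels

theorem taut_path_level_once_decreasing_general
    (G : SimpleGraph V)
    (taut : V → Sym2 V → Sym2 V → Prop)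
    (taut_symm : ∀ v e f, taut v e f → taut v f e)
    (L : Sym2 V → ℕ∞) (hL : IsEdgeLevel G taut L)
    (n : ℕ) (p : ℕ → V) (hp : IsTautPath G taut n p)
    (ℓ : ℕ → ℕ∞) (hℓ : ∀ i, ℓ i = L s(p (i - 1), p i)) :
    ∀ i, 1 ≤ i → i + 2 ≤ n → ℓ (i + 1) ≤ ℓ i → ℓ (i + 1) < ⊤ →
      ℓ (i + 2) < ℓ (i + 1) := by
  intro i hi hin hle hlt
  obtain ⟨-, hadj, hturn⟩ := hp
  obtain ⟨j, rfl⟩ : ∃ j, i = j + 1 := ⟨i - 1, by omega⟩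
  have hprev : G.Adj (p j) (p (j + 1)) := hadj j (by omega)
  have hcur : G.Adj (p (j + 1)) (p (j + 2)) := hadj (j + 1) (by omega)
  have hnext : G.Adj (p (j + 2)) (p (j + 3)) := hadj (j + 2) (by omega)
  have hturn_in : taut (p (j + 1)) s(p j, p (j + 1)) s(p (j + 1), p (j + 2)) :=
    hturn (j + 1) (by omega) (by omega)
  have hturn_out : taut (p (j + 2)) s(p (j + 1), p (j + 2)) s(p (j + 2), p (j + 3)) :=
    hturn (j + 2) (by omega) (by omega)
  simp only [hℓ, Nat.add_sub_cancel] at hle hlt ⊢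
  exact level_lt_of_taut_turns (hL.1 _ hcur) hlt.ne hprev (Sym2.mem_mk_right _ _)
    (taut_symm _ _ _ hturn_in) hle hnext (Sym2.mem_mk_left _ _) hturn_out

/-- Along a taut path `p 0 … p n` with edges `e_i = p (i-1) p i` and levels `ℓ_i = L e_i`,
for every `1 ≤ i ≤ n - 2`: if `ℓ i ≥ ℓ (i+1)` and `ℓ (i+1)` is finite, then
`ℓ (i+1) > ℓ (i+2)`. -/
theorem taut_path_level_once_decreasing
    [Fintype V] (G : SimpleGraph V)
    (taut : V → Sym2 V → Sym2 V → Prop)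
    (taut_symm : ∀ v e f, taut v e f → taut v f e)
    (L : Sym2 V → ℕ∞) (hL : IsEdgeLevel G taut L)
    (n : ℕ) (p : ℕ → V) (hp : IsTautPath G taut n p)
    (ℓ : ℕ → ℕ∞) (hℓ : ∀ i, ℓ i = L s(p (i - 1), p i)) :
    ∀ i, 1 ≤ i → i + 2 ≤ n → ℓ (i + 1) ≤ ℓ i → ℓ (i + 1) < ⊤ →
      ℓ (i + 2) < ℓ (i + 1) :=
  taut_path_level_once_decreasing_general G taut taut_symm L hL n p hp ℓ hℓ
end

section
/- Let P = v_0 v_1 ⋯ v_n be any taut path in G, with edges e_i = v_{i−1}v_i and levels ℓ_i = L(e_i). Then there exist integers k_1, k_2 with 0 ≤ k_1 ≤ k_2 ≤ n such that: ℓ_i is finite for all 1 ≤ i ≤ k_1 and ℓ_i < ℓ_{i+1} for all 1 ≤ i ≤ k_1−1 (strictly increasing finite prefix); ℓ_i = ∞ for all k_1 < i ≤ k_2 (a middle block of level-W edges); and ℓ_i is finite for all k_2 < i ≤ n with ℓ_i > ℓ_{i+1} for all k_2+1 ≤ i ≤ n−1 (strictly decreasing finite suffix). -/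
open SimpleGraph

variable {V : Type*}

/-- **Fact 2**: if an edge `s(a,b)` of `G` has finite level, then at one of its endpoints
every taut neighbour has strictly smaller level. -/
lemma tautPath_aux_fact2 (G : SimpleGraph V) (taut : V → Sym2 V → Sym2 V → Prop)
    (L : Sym2 V → ℕ∞) (hfp : ∀ e ∈ G.edgeSet, L e = levelOp G taut L e)
    {a b : V} (hab : G.Adj a b) (hfin : L s(a,b) < ⊤) :
    (∀ f ∈ G.edgeSet, a ∈ f → taut a s(a,b) f → L f < L s(a,b)) ∨
    (∀ f ∈ G.edgeSet, b ∈ f → taut b s(a,b) f → L f < L s(a,b)) := by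
  have he : s(a,b) ∈ G.edgeSet := (G.mem_edgeSet).mpr hab
  have heq := hfp _ he
  set ga := sSup (tautNbrLevels G taut L a s(a,b)) with hga
  set gb := sSup (tautNbrLevels G taut L b s(a,b)) with hgb
  have hinf : (⨅ v ∈ s(a,b), sSup (tautNbrLevels G taut L v s(a,b))) = ga ⊓ gb := by
    apply le_antisymm
    · exact le_inf (iInf₂_le a (by simp)) (iInf₂_le b (by simp))
    · refine le_iInf₂ fun v hv => ?_
      rcases Sym2.mem_iff.mp hv with rfl | rfl
      · exact inf_le_left
      · exact inf_le_right
  rw [levelOp, hinf] at heq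
  rcases le_total ga gb with h | h
  · left
    intro f hf haf htaut
    have hmem : L f ∈ tautNbrLevels G taut L a s(a,b) := ⟨f, hf, haf, htaut, rfl⟩
    have hle : L f ≤ ga := le_sSup hmem
    have hLe : L s(a,b) = 1 + ga := by rw [heq, inf_eq_left.mpr h]
    have hga_ne : ga ≠ ⊤ := by
      intro hT; rw [hT] at hLe; simp at hLe; rw [hLe] at hfin; exact absurd hfin (lt_irrefl _)
    calc L f ≤ ga := hle
    _ < ga + 1 := by exact (ENat.lt_add_one_iff hga_ne).mpr le_rfl
    _ = 1 + ga := add_comm _ _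
    _ = L s(a,b) := hLe.symm
  · right
    intro f hf hbf htaut
    have hmem : L f ∈ tautNbrLevels G taut L b s(a,b) := ⟨f, hf, hbf, htaut, rfl⟩
    have hle : L f ≤ gb := le_sSup hmem
    have hLe : L s(a,b) = 1 + gb := by rw [heq, inf_eq_right.mpr h]
    have hgb_ne : gb ≠ ⊤ := by
      intro hT; rw [hT] at hLe; simp at hLe; rw [hLe] at hfin; exact absurd hfin (lt_irrefl _)
    calc L f ≤ gb := hle
    _ < gb + 1 := by exact (ENat.lt_add_one_iff hgb_ne).mpr le_rfl
    _ = 1 + gb := add_comm _ _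
    _ = L s(a,b) := hLe.symm

/-- **Step lemma**: an edge of finite level along a taut path has a strictly smaller
neighbour edge either to its left or to its right. -/
lemma tautPath_aux_step (G : SimpleGraph V) (taut : V → Sym2 V → Sym2 V → Prop)
    (taut_symm : ∀ v e f, taut v e f → taut v f e)
    (L : Sym2 V → ℕ∞) (hfp : ∀ e ∈ G.edgeSet, L e = levelOp G taut L e)
    (n : ℕ) (p : ℕ → V) (hp : IsTautPath G taut n p)
    (ℓ : ℕ → ℕ∞) (hℓ : ∀ i, ℓ i = L s(p (i - 1), p i))
    (i : ℕ) (h1 : 1 ≤ i) (hn : i ≤ n) (hfin : ℓ i < ⊤) :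
    (2 ≤ i → ℓ (i - 1) < ℓ i) ∨ (i < n → ℓ (i + 1) < ℓ i) := by
  obtain ⟨m, rfl⟩ : ∃ m, i = m + 1 := ⟨i - 1, by omega⟩
  have hadj : G.Adj (p m) (p (m + 1)) := hp.2.1 m (by omega)
  have hℓi : ℓ (m + 1) = L s(p m, p (m + 1)) := by rw [hℓ]; norm_num
  rw [hℓi] at hfin
  rcases tautPath_aux_fact2 G taut L hfp hadj hfin with h | h
  · left
    intro h2
    have hm1 : 1 ≤ m := by omega
    have hadj' : G.Adj (p (m - 1)) (p m) := by
      have := hp.2.1 (m - 1) (by omega)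
      rwa [show m - 1 + 1 = m by omega] at this
    have htaut := hp.2.2 m hm1 (by omega)
    have htaut' := taut_symm _ _ _ htaut
    have := h s(p (m - 1), p m) ((G.mem_edgeSet).mpr hadj') (Sym2.mem_mk_right _ _) htaut'
    rw [hℓi, hℓ (m + 1 - 1)]
    simpa using this
  · right
    intro hlt
    have hadj' : G.Adj (p (m + 1)) (p (m + 1 + 1)) := hp.2.1 (m + 1) hlt
    have htaut := hp.2.2 (m + 1) (by omega) hlt
    rw [show m + 1 - 1 = m by omega] at htaut
    have := h s(p (m + 1), p (m + 1 + 1)) ((G.mem_edgeSet).mpr hadj') (Sym2.mem_mk_left _ _) htaut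
    rw [hℓi, hℓ (m + 1 + 1)]
    simpa using this

/-- The purely combinatorial part: any sequence with the one-step property of
`tautPath_aux_step` has the increasing/infinite/decreasing structure. -/
theorem tautPath_aux_comb (n : ℕ) (ℓ : ℕ → ℕ∞) (hn : 1 ≤ n)
    (hstep : ∀ i, 1 ≤ i → i ≤ n → ℓ i < ⊤ →
      (2 ≤ i → ℓ (i - 1) < ℓ i) ∨ (i < n → ℓ (i + 1) < ℓ i)) :
    ∃ k₁ k₂, k₁ ≤ k₂ ∧ k₂ ≤ n ∧
      (∀ i, 1 ≤ i → i ≤ k₁ → ℓ i < ⊤) ∧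
      (∀ i, 1 ≤ i → i + 1 ≤ k₁ → ℓ i < ℓ (i + 1)) ∧
      (∀ i, k₁ < i → i ≤ k₂ → ℓ i = ⊤) ∧
      (∀ i, k₂ < i → i ≤ n → ℓ i < ⊤) ∧
      (∀ i, k₂ + 1 ≤ i → i + 1 ≤ n → ℓ (i + 1) < ℓ i) := by
  classical
  set P : ℕ → Prop := fun k => k ≤ n ∧ (∀ i, k < i → i ≤ n → ℓ i < ⊤) ∧
      (∀ i, k + 1 ≤ i → i + 1 ≤ n → ℓ (i + 1) < ℓ i) with hP
  have hPn : P n := ⟨le_rfl, fun i h1 h2 => absurd (lt_of_lt_of_le h1 h2) (lt_irrefl _),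
      fun i h1 h2 => by omega⟩
  have hex : ∃ k, P k := ⟨n, hPn⟩
  set k₂ := Nat.find hex with hk₂
  have hPk₂ : P k₂ := Nat.find_spec hex
  have hk₂min : ∀ k < k₂, ¬ P k := fun k hk => Nat.find_min hex hk
  set Q : ℕ → Prop := fun k => k ≤ k₂ ∧ ∀ i, k < i → i ≤ k₂ → ℓ i = ⊤ with hQ
  have hQk₂ : Q k₂ := ⟨le_rfl, fun i h1 h2 => absurd (lt_of_lt_of_le h1 h2) (lt_irrefl _)⟩
  have hex2 : ∃ k, Q k := ⟨k₂, hQk₂⟩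
  set k₁ := Nat.find hex2 with hk₁
  have hQk₁ : Q k₁ := Nat.find_spec hex2
  have hk₁min : ∀ k < k₁, ¬ Q k := fun k hk => Nat.find_min hex2 hk
  have hk12 : k₁ ≤ k₂ := hQk₁.1
  have hk2n : k₂ ≤ n := hPk₂.1
  -- ℓ k₁ is finite when k₁ ≥ 1
  have hfink₁ : 1 ≤ k₁ → ℓ k₁ < ⊤ := by
    intro h1
    by_contra hc
    push_neg at hc
    have hT : ℓ k₁ = ⊤ := le_antisymm le_top hc
    apply hk₁min (k₁ - 1) (by omega)
    refine ⟨by omega, fun i hi1 hi2 => ?_⟩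
    rcases eq_or_lt_of_le (show k₁ ≤ i by omega) with rfl | h
    · exact hT
    · exact hQk₁.2 i h hi2
  -- key: an index ≤ k₁ of finite level has a strictly smaller predecessor
  have hC : ∀ i, 1 ≤ i → i ≤ k₁ → ℓ i < ⊤ → 2 ≤ i → ℓ (i - 1) < ℓ i := by
    intro i h1 hik hfin h2
    rcases hstep i h1 (le_trans hik (le_trans hk12 hk2n)) hfin with h | h
    · exact h h2
    · exfalso
      rcases lt_or_ge i n with hin | hin
      · -- decreasing from i onward; contradicts minimality of k₂
        have hdown := h hin
        have hF : ∀ j, i ≤ j → j ≤ n → ℓ j < ⊤ ∧ (j < n → ℓ (j + 1) < ℓ j) := by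
          intro j hij
          induction j, hij using Nat.le_induction with
          | base => exact fun _ => ⟨hfin, fun _ => hdown⟩
          | succ j hij ih =>
            intro hjn
            have hj : j < n := by omega
            obtain ⟨hjfin, hjd⟩ := ih (le_of_lt hj)
            have hlt := hjd hj
            refine ⟨lt_trans hlt hjfin, fun hj1n => ?_⟩
            rcases hstep (j + 1) (by omega) hjn (lt_trans hlt hjfin) with h' | h'
            · exfalso
              have := h' (by omega)
              rw [show j + 1 - 1 = j by omega] at this
              exact absurd hlt (asymm this)
            · exact h' hj1n
        apply hk₂min (i - 1) (by omega)
        refine ⟨by omega, fun j hj1 hj2 => (hF j (by omega) hj2).1, fun j hj1 hj2 => ?_⟩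
        exact (hF j (by omega) (by omega)).2 (by omega)
      · -- i = n, so k₁ = k₂ = n; minimality of k₂ at n-1 forces ℓ n = ⊤
        have hi_eq : i = n := by omega
        have hk₂n : k₂ = n := by omega
        apply hk₂min (n - 1) (by omega)
        refine ⟨by omega, fun j hj1 hj2 => ?_, fun j hj1 hj2 => by omega⟩
        have : j = n := by omega
        subst this
        rwa [← hi_eq]
  -- finiteness of the prefix, by downward induction
  have h3' : ∀ d i, i + d = k₁ → 1 ≤ i → ℓ i < ⊤ := by
    intro d
    induction d with
    | zero => intro i hi h1; rw [Nat.add_zero] at hi; subst hi; exact hfink₁ h1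
    | succ d ih =>
      intro i hi h1
      have hfin1 : ℓ (i + 1) < ⊤ := ih (i + 1) (by omega) (by omega)
      have := hC (i + 1) (by omega) (by omega) hfin1 (by omega)
      rw [show i + 1 - 1 = i by omega] at this
      exact lt_trans this hfin1
  have h3 : ∀ i, 1 ≤ i → i ≤ k₁ → ℓ i < ⊤ := fun i h1 h2 => h3' (k₁ - i) i (by omega) h1
  refine ⟨k₁, k₂, hk12, hk2n, h3, ?_, hQk₁.2, hPk₂.2.1, hPk₂.2.2⟩
  intro i h1 h2
  have := hC (i + 1) (by omega) h2 (h3 (i + 1) (by omega) h2) (by omega)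
  rwa [show i + 1 - 1 = i by omega] at this

/-- The level sequence of any taut path consists of a strictly increasing finite-level
prefix `ℓ 1 < ⋯ < ℓ k₁`, a middle block `ℓ (k₁+1), …, ℓ k₂` of level-W (infinite level)
edges, and a strictly decreasing finite-level suffix `ℓ (k₂+1) > ⋯ > ℓ n`. -/
theorem taut_path_levels_structure
    [Fintype V] (G : SimpleGraph V)
    (taut : V → Sym2 V → Sym2 V → Prop)
    (taut_symm : ∀ v e f, taut v e f → taut v f e)
    (L : Sym2 V → ℕ∞) (hL : IsEdgeLevel G taut L)
    (n : ℕ) (p : ℕ → V) (hp : IsTautPath G taut n p)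
    (ℓ : ℕ → ℕ∞) (hℓ : ∀ i, ℓ i = L s(p (i - 1), p i)) :
    ∃ k₁ k₂, k₁ ≤ k₂ ∧ k₂ ≤ n ∧
      (∀ i, 1 ≤ i → i ≤ k₁ → ℓ i < ⊤) ∧
      (∀ i, 1 ≤ i → i + 1 ≤ k₁ → ℓ i < ℓ (i + 1)) ∧
      (∀ i, k₁ < i → i ≤ k₂ → ℓ i = ⊤) ∧
      (∀ i, k₂ < i → i ≤ n → ℓ i < ⊤) ∧
      (∀ i, k₂ + 1 ≤ i → i + 1 ≤ n → ℓ (i + 1) < ℓ i) := by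
  exact tautPath_aux_comb n ℓ hp.1
    (tautPath_aux_step G taut taut_symm L hL.1 n p hp ℓ hℓ)
end

section
/- Let P = v_0 v_1 ⋯ v_n be a taut path in G, with edges e_i = v_{i−1}v_i for 1 ≤ i ≤ n. Then for every index i with 1 ≤ i ≤ n, if L(e_i) is finite, then L(e_i) ≥ min(i, n+1−i); that is, an edge of finite level ℓ occurring in a taut path must be the k-th edge counted from one of the two ends of the path for some k ≤ ℓ. -/
/-!
By the fixed-point equation, an edge of finite level `ℓ` has an endpoint at which every taut
neighbour has level `< ℓ`. On a taut path an interior edge has a taut neighbour at each endpoint,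
namely the adjacent path edge, so one of the two adjacent path edges has smaller level. Strong
induction on the level then walks towards an end of the path, and the distance to the nearer end
changes by at most one per step.
-/

open SimpleGraph

variable {V : Type*}

section

variable {G : SimpleGraph V} {taut : V → Sym2 V → Sym2 V → Prop} {L : Sym2 V → ℕ∞}

theorem tautNbrLevels_lt_or_tautNbrLevels_lt
    (hfix : ∀ e ∈ G.edgeSet, L e = levelOp G taut L e) {u w : V} (huw : G.Adj u w)
    (hfin : L s(u, w) ≠ ⊤) :
    (∀ ℓ ∈ tautNbrLevels G taut L u s(u, w), ℓ < L s(u, w)) ∨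
      ∀ ℓ ∈ tautNbrLevels G taut L w s(u, w), ℓ < L s(u, w) := by
  rw [hfix _ huw, levelOp_mk, add_comm] at hfin ⊢
  set a := sSup (tautNbrLevels G taut L u s(u, w))
  set b := sSup (tautNbrLevels G taut L w s(u, w))
  have hlt : ∀ ℓ ≤ a ⊓ b, ℓ < a ⊓ b + 1 := fun ℓ hℓ =>
    (ENat.lt_add_one_iff (by simpa using hfin)).mpr hℓ
  rcases le_total a b with hab | hba
  · left
    intro ℓ hℓ
    exact hlt ℓ ((le_sSup hℓ).trans_eq (inf_eq_left.mpr hab).symm)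
  · right
    intro ℓ hℓ
    exact hlt ℓ ((le_sSup hℓ).trans_eq (inf_eq_right.mpr hba).symm)

theorem natCast_le_of_le_of_lt {a b : ℕ} {x y : ℕ∞} (hba : b ≤ a + 1) (hax : (a : ℕ∞) ≤ x)
    (hxy : x < y) : (b : ℕ∞) ≤ y :=
  calc (b : ℕ∞) ≤ (a : ℕ∞) + 1 := by exact_mod_cast hba
    _ ≤ y := Order.add_one_le_of_lt (hax.trans_lt hxy)

namespace IsTautPath

variable {n : ℕ} {p : ℕ → V}

theorem taut_succ (hp : IsTautPath G taut n p) {i : ℕ} (hi : i + 1 < n) :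
    taut (p (i + 1)) s(p i, p (i + 1)) s(p (i + 1), p (i + 2)) := by
  simpa using hp.2.2 (i + 1) (Nat.le_add_left 1 i) hi

theorem mem_tautNbrLevels_succ (hp : IsTautPath G taut n p) {i : ℕ} (hi : i + 1 < n) :
    L s(p (i + 1), p (i + 2)) ∈ tautNbrLevels G taut L (p (i + 1)) s(p i, p (i + 1)) :=
  ⟨_, hp.2.1 (i + 1) hi, Sym2.mem_mk_left _ _, hp.taut_succ hi, rfl⟩

theorem mem_tautNbrLevels_pred (taut_symm : ∀ v e f, taut v e f → taut v f e)
    (hp : IsTautPath G taut n p) {i : ℕ} (hi : i + 1 < n) :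
    L s(p i, p (i + 1)) ∈ tautNbrLevels G taut L (p (i + 1)) s(p (i + 1), p (i + 2)) :=
  ⟨_, hp.2.1 i (by omega), Sym2.mem_mk_right _ _, taut_symm _ _ _ (hp.taut_succ hi), rfl⟩

theorem min_le_level (hfix : ∀ e ∈ G.edgeSet, L e = levelOp G taut L e)
    (taut_symm : ∀ v e f, taut v e f → taut v f e) (hp : IsTautPath G taut n p)
    {i : ℕ} (hi : i < n) (hfin : L s(p i, p (i + 1)) ≠ ⊤) :
    ((min (i + 1) (n - i) : ℕ) : ℕ∞) ≤ L s(p i, p (i + 1)) := by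
  induction hℓ : L s(p i, p (i + 1)) using WellFoundedLT.induction generalizing i with
  | _ ℓ ih =>
    have hadj := hp.2.1 i hi
    by_cases hinner : 0 < i ∧ i + 1 < n
    · obtain ⟨j, rfl⟩ : ∃ j, i = j + 1 := ⟨i - 1, by omega⟩
      rcases tautNbrLevels_lt_or_tautNbrLevels_lt hfix hadj hfin with hlt | hlt
      · have hj := hlt _ (hp.mem_tautNbrLevels_pred taut_symm (by omega))
        rw [hℓ] at hj
        exact natCast_le_of_le_of_lt (by omega) (ih _ hj (by omega) hj.ne_top rfl) hj
      · have hj := hlt _ (hp.mem_tautNbrLevels_succ hinner.2)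
        rw [hℓ] at hj
        exact natCast_le_of_le_of_lt (by omega) (ih _ hj hinner.2 hj.ne_top rfl) hj
    · have hpos : 1 ≤ ℓ := hℓ ▸ hfix _ (G.mem_edgeSet.mpr hadj) ▸ le_self_add
      exact le_trans (by exact_mod_cast (by omega : min (i + 1) (n - i) ≤ 1)) hpos

end IsTautPath

end

theorem taut_path_finite_level_lower_bound_general
    (G : SimpleGraph V)
    (taut : V → Sym2 V → Sym2 V → Prop)
    (taut_symm : ∀ v e f, taut v e f → taut v f e)
    (L : Sym2 V → ℕ∞) (hL : IsEdgeLevel G taut L)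
    (n : ℕ) (p : ℕ → V) (hp : IsTautPath G taut n p) :
    ∀ i, 1 ≤ i → i ≤ n → L s(p (i - 1), p i) < ⊤ →
      (min i (n + 1 - i) : ℕ∞) ≤ L s(p (i - 1), p i) := by
  rintro i hi hin hfin
  obtain ⟨j, rfl⟩ := Nat.exists_eq_add_of_le' hi
  rw [Nat.add_sub_cancel] at hfin ⊢
  have key := hp.min_le_level hL.1 taut_symm (by omega) hfin.ne
  have hcast : ((j + 1 : ℕ) : ℕ∞) ⊓ (n + 1 - ((j + 1 : ℕ) : ℕ∞)) =
      ((min (j + 1) (n - j) : ℕ) : ℕ∞) := by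
    rw [← Nat.cast_add_one n, ← ENat.natCast_sub, Nat.add_sub_add_right, Nat.mono_cast.map_min]
  rw [hcast]
  exact key

/-- Along a taut path `p 0 … p n`, any edge `e_i = p (i-1) p i` (`1 ≤ i ≤ n`) of finite
level satisfies `L e_i ≥ min i (n + 1 - i)`: an edge of finite level `ℓ` occurring in a
taut path must be the `k`-th edge counted from one of the two ends for some `k ≤ ℓ`. -/
theorem taut_path_finite_level_lower_bound
    [Fintype V] (G : SimpleGraph V)
    (taut : V → Sym2 V → Sym2 V → Prop)
    (taut_symm : ∀ v e f, taut v e f → taut v f e)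
    (L : Sym2 V → ℕ∞) (hL : IsEdgeLevel G taut L)
    (n : ℕ) (p : ℕ → V) (hp : IsTautPath G taut n p) :
    ∀ i, 1 ≤ i → i ≤ n → L s(p (i - 1), p i) < ⊤ →
      (min i (n + 1 - i) : ℕ∞) ≤ L s(p (i - 1), p i) :=
  taut_path_finite_level_lower_bound_general G taut taut_symm L hL n p hp
end

section
/- Fix vertices s, t ∈ V, and let H ⊆ E be the set of edges that are marked from s, or marked from t, or are level-W. Then every taut path from s to t uses only edges belonging to H; in particular, every taut path (and hence every optimal path, since optimal paths are taut) from s to t resides within the subgraph induced by H. -/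
open SimpleGraph

variable {V : Type*}

/-- An edge `e` is *marked from* `s` if there is a taut path starting at `s` whose edges
all have finite level, whose successive edge levels are strictly increasing, and whose
final edge is `e`. -/
def MarkedFrom (G : SimpleGraph V) (taut : V → Sym2 V → Sym2 V → Prop)
    (L : Sym2 V → ℕ∞) (s : V) (e : Sym2 V) : Prop :=
  ∃ (m : ℕ) (p : ℕ → V), IsTautPath G taut m p ∧ p 0 = s ∧
    (∀ i, 1 ≤ i → i ≤ m → L s(p (i - 1), p i) < ⊤) ∧
    (∀ i, 1 ≤ i → i + 1 ≤ m → L s(p (i - 1), p i) < L s(p i, p (i + 1))) ∧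
    s(p (m - 1), p m) = e

/-!
Let `e` be an edge of finite level on a taut path from `s` to `t`. The minimum in the fixed-point
equation for `L e` is attained at one endpoint `v` of `e`, and then every taut neighbour of `e`
at `v` has level strictly below `L e`. In particular the path's edge before `e` (on the side of
`v`) has smaller level, and its own minimum cannot sit at the shared vertex, since `e` is a
taut neighbour of it there with larger level. Walking back along the path in this way reaches
the end of the path behind `v` through edges of strictly decreasing finite level, so `e` is
marked from `s` or, by reversing the path, from `t`.
-/

namespace Sym2

theorem exists_mem_iInf_eq {α β : Type*} [CompleteLinearOrder β] (f : α → β) (e : Sym2 α) :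
    ∃ v ∈ e, ⨅ w ∈ e, f w = f v := by
  induction e using Sym2.ind with
  | _ a b =>
    have hinf : ⨅ w ∈ s(a, b), f w = f a ⊓ f b := by
      simp only [Sym2.mem_iff, iInf_or, iInf_inf_eq, iInf_iInf_eq_left]
    rcases min_choice (f a) (f b) with h | h
    · exact ⟨a, mem_mk_left a b, hinf.trans h⟩
    · exact ⟨b, mem_mk_right a b, hinf.trans h⟩

end Sym2

theorem ENat.lt_of_one_add_le {x y : ℕ∞} (h : 1 + x ≤ y) (hy : y ≠ ⊤) : x < y := by
  have hx : x ≠ ⊤ := by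
    rintro rfl
    exact hy (top_le_iff.mp (by simpa using h))
  exact (ENat.add_one_le_iff hx).mp (by rwa [add_comm])

section TautPath

variable {G : SimpleGraph V} {taut : V → Sym2 V → Sym2 V → Prop} {L : Sym2 V → ℕ∞}

def LevelDominatesAt (G : SimpleGraph V) (taut : V → Sym2 V → Sym2 V → Prop)
    (L : Sym2 V → ℕ∞) (v : V) (e : Sym2 V) : Prop :=
  ∀ f ∈ G.edgeSet, v ∈ f → taut v e f → 1 + L f ≤ L e

theorem exists_levelDominatesAt (hfix : ∀ e ∈ G.edgeSet, L e = levelOp G taut L e)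
    {e : Sym2 V} (he : e ∈ G.edgeSet) : ∃ v ∈ e, LevelDominatesAt G taut L v e := by
  obtain ⟨v, hv, hmin⟩ := Sym2.exists_mem_iInf_eq (fun w => sSup (tautNbrLevels G taut L w e)) e
  refine ⟨v, hv, fun f hf hvf htaut => ?_⟩
  calc 1 + L f ≤ 1 + sSup (tautNbrLevels G taut L v e) := by
        gcongr
        exact le_sSup ⟨f, hf, hvf, htaut, rfl⟩
    _ = L e := by rw [hfix e he, levelOp, hmin]

namespace IsTautPath

variable {n : ℕ} {p : ℕ → V}

theorem reverse (taut_symm : ∀ v e f, taut v e f → taut v f e) (hp : IsTautPath G taut n p) :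
    IsTautPath G taut n (fun j => p (n - j)) := by
  refine ⟨hp.1, fun i hi => ?_, fun i hi hin => ?_⟩
  · obtain ⟨m, hm, hm'⟩ : ∃ m, n - i = m + 1 ∧ n - (i + 1) = m := ⟨n - i - 1, by omega, by omega⟩
    simpa only [hm, hm'] using (hp.2.1 m (by omega)).symm
  · obtain ⟨m, hm, hm', hm''⟩ : ∃ m, n - i = m + 1 ∧ n - (i + 1) = m ∧ n - (i - 1) = m + 2 :=
      ⟨n - i - 1, by omega, by omega, by omega⟩
    have htaut := hp.2.2 (m + 1) (by omega) (by omega)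
    rw [Nat.add_sub_cancel] at htaut
    simp only [hm, hm', hm'']
    rw [Sym2.eq_swap (a := p (m + 2)), Sym2.eq_swap (a := p (m + 1)) (b := p m)]
    exact taut_symm _ _ _ htaut

theorem take (hp : IsTautPath G taut n p) {m : ℕ} (hm : 1 ≤ m) (hmn : m ≤ n) :
    IsTautPath G taut m p :=
  ⟨hm, fun i hi => hp.2.1 i (by omega), fun i hi hin => hp.2.2 i hi (by omega)⟩

theorem level_lt_of_levelDominatesAt (taut_symm : ∀ v e f, taut v e f → taut v f e)
    (hp : IsTautPath G taut n p) {k : ℕ} (hk : k + 1 < n)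
    (hfin : L s(p (k + 1), p (k + 2)) ≠ ⊤)
    (hdom : LevelDominatesAt G taut L (p (k + 1)) s(p (k + 1), p (k + 2))) :
    L s(p k, p (k + 1)) < L s(p (k + 1), p (k + 2)) :=
  ENat.lt_of_one_add_le (hdom _ (hp.2.1 k (by omega)) (Sym2.mem_mk_right _ _)
    (taut_symm _ _ _ (hp.2.2 (k + 1) (by omega) (by omega)))) hfin

theorem levelDominatesAt_pred (hfix : ∀ e ∈ G.edgeSet, L e = levelOp G taut L e)
    (taut_symm : ∀ v e f, taut v e f → taut v f e)
    (hp : IsTautPath G taut n p) {k : ℕ} (hk : k + 1 < n)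
    (hfin : L s(p (k + 1), p (k + 2)) ≠ ⊤)
    (hdom : LevelDominatesAt G taut L (p (k + 1)) s(p (k + 1), p (k + 2))) :
    L s(p k, p (k + 1)) ≠ ⊤ ∧ LevelDominatesAt G taut L (p k) s(p k, p (k + 1)) := by
  have hlt := hp.level_lt_of_levelDominatesAt taut_symm hk hfin hdom
  have hfin' : L s(p k, p (k + 1)) ≠ ⊤ := (hlt.trans_le le_top).ne
  refine ⟨hfin', ?_⟩
  obtain ⟨v, hv, hvdom⟩ := exists_levelDominatesAt hfix (G.mem_edgeSet.mpr (hp.2.1 k (by omega)))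
  rcases Sym2.mem_iff.mp hv with rfl | rfl
  · exact hvdom
  · have hgt := ENat.lt_of_one_add_le (hvdom _ (hp.2.1 (k + 1) hk) (Sym2.mem_mk_left _ _)
      (hp.2.2 (k + 1) (by omega) (by omega))) hfin'
    exact absurd hlt hgt.asymm

theorem levelDominatesAt_of_le (hfix : ∀ e ∈ G.edgeSet, L e = levelOp G taut L e)
    (taut_symm : ∀ v e f, taut v e f → taut v f e)
    (hp : IsTautPath G taut n p) {k : ℕ} (hk : k < n) (hfin : L s(p k, p (k + 1)) ≠ ⊤)
    (hdom : LevelDominatesAt G taut L (p k) s(p k, p (k + 1))) {j : ℕ} (hjk : j ≤ k) :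
    L s(p j, p (j + 1)) ≠ ⊤ ∧ LevelDominatesAt G taut L (p j) s(p j, p (j + 1)) := by
  induction k with
  | zero =>
    obtain rfl : j = 0 := by omega
    exact ⟨hfin, hdom⟩
  | succ k ih =>
    rcases hjk.eq_or_lt with rfl | hjk
    · exact ⟨hfin, hdom⟩
    · obtain ⟨hfin', hdom'⟩ := hp.levelDominatesAt_pred hfix taut_symm hk hfin hdom
      exact ih (by omega) hfin' hdom' (by omega)

theorem markedFrom_of_levelDominatesAt (hfix : ∀ e ∈ G.edgeSet, L e = levelOp G taut L e)
    (taut_symm : ∀ v e f, taut v e f → taut v f e)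
    (hp : IsTautPath G taut n p) {k : ℕ} (hk : k < n) (hfin : L s(p k, p (k + 1)) ≠ ⊤)
    (hdom : LevelDominatesAt G taut L (p k) s(p k, p (k + 1))) :
    MarkedFrom G taut L (p 0) s(p k, p (k + 1)) := by
  have hchain := fun j (hj : j ≤ k) => hp.levelDominatesAt_of_le hfix taut_symm hk hfin hdom hj
  refine ⟨k + 1, p, hp.take (by omega) hk, rfl, fun i hi hik => ?_, fun i hi hik => ?_, rfl⟩
  · obtain ⟨j, rfl⟩ : ∃ j, i = j + 1 := ⟨i - 1, by omega⟩
    exact (hchain j (by omega)).1.lt_top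
  · obtain ⟨j, rfl⟩ : ∃ j, i = j + 1 := ⟨i - 1, by omega⟩
    obtain ⟨hfin', hdom'⟩ := hchain (j + 1) (by omega)
    exact hp.level_lt_of_levelDominatesAt taut_symm (by omega) hfin' hdom'

theorem markedFrom_start_or_end (hfix : ∀ e ∈ G.edgeSet, L e = levelOp G taut L e)
    (taut_symm : ∀ v e f, taut v e f → taut v f e)
    (hp : IsTautPath G taut n p) {k : ℕ} (hk : k < n) (hfin : L s(p k, p (k + 1)) ≠ ⊤) :
    MarkedFrom G taut L (p 0) s(p k, p (k + 1)) ∨ MarkedFrom G taut L (p n) s(p k, p (k + 1)) := by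
  obtain ⟨v, hv, hdom⟩ := exists_levelDominatesAt hfix (G.mem_edgeSet.mpr (hp.2.1 k hk))
  rcases Sym2.mem_iff.mp hv with rfl | rfl
  · exact .inl (hp.markedFrom_of_levelDominatesAt hfix taut_symm hk hfin hdom)
  · have hk1 : n - (n - k - 1) = k + 1 := by omega
    have hk0 : n - (n - k - 1 + 1) = k := by omega
    have hswap : s(p (k + 1), p k) = s(p k, p (k + 1)) := Sym2.eq_swap
    have := (hp.reverse taut_symm).markedFrom_of_levelDominatesAt hfix taut_symm
      (k := n - k - 1) (by omega) (by simpa only [hk1, hk0, hswap] using hfin)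
      (by simpa only [hk1, hk0, hswap] using hdom)
    exact .inr (by simpa only [hk1, hk0, hswap, Nat.sub_zero] using this)

end IsTautPath

end TautPath

theorem taut_path_in_marked_subgraph_general
    (G : SimpleGraph V)
    (taut : V → Sym2 V → Sym2 V → Prop)
    (taut_symm : ∀ v e f, taut v e f → taut v f e)
    (L : Sym2 V → ℕ∞) (hL : IsEdgeLevel G taut L)
    (s t : V) (H : Set (Sym2 V))
    (hH : H = {e | MarkedFrom G taut L s e ∨ MarkedFrom G taut L t e ∨ L e = ⊤})
    (n : ℕ) (p : ℕ → V) (hp : IsTautPath G taut n p)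
    (hps : p 0 = s) (hpt : p n = t) :
    ∀ i, 1 ≤ i → i ≤ n → s(p (i - 1), p i) ∈ H := by
  rintro i hi hin
  obtain ⟨k, rfl⟩ : ∃ k, i = k + 1 := ⟨i - 1, by omega⟩
  subst hH hps hpt
  rw [Nat.add_sub_cancel]
  by_cases htop : L s(p k, p (k + 1)) = ⊤
  · exact .inr (.inr htop)
  · rcases hp.markedFrom_start_or_end hL.1 taut_symm (by omega) htop with h | h
    exacts [.inl h, .inr (.inl h)]

/-- Let `H` be the set of edges that are marked from `s`, or marked from `t`, or are
level-W. Then every taut path from `s` to `t` uses only edges belonging to `H`. -/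
theorem taut_path_in_marked_subgraph
    [Fintype V] (G : SimpleGraph V)
    (taut : V → Sym2 V → Sym2 V → Prop)
    (taut_symm : ∀ v e f, taut v e f → taut v f e)
    (L : Sym2 V → ℕ∞) (hL : IsEdgeLevel G taut L)
    (s t : V) (H : Set (Sym2 V))
    (hH : H = {e | MarkedFrom G taut L s e ∨ MarkedFrom G taut L t e ∨ L e = ⊤})
    (n : ℕ) (p : ℕ → V) (hp : IsTautPath G taut n p)
    (hps : p 0 = s) (hpt : p n = t) :
    ∀ i, 1 ≤ i → i ≤ n → s(p (i - 1), p i) ∈ H :=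
  taut_path_in_marked_subgraph_general G taut taut_symm L hL s t H hH n p hp hps hpt
end

section
/- If an edge e ∈ E lies on a taut cycle — that is, there is a closed walk v_0 v_1 ⋯ v_n with v_n = v_0, n ≥ 2, that uses e as one of its edges and such that for every index i (taken cyclically modulo n) the pair of edges (v_{i−1}v_i, v_i v_{i+1}) is taut at v_i — then L(e) = ∞, i.e., e is a level-W edge. -/
open SimpleGraph

variable {V : Type*}

/-!
The edges of a taut cycle form a set `S` of edges each of which has, at both endpoints, a taut
neighbour in `S`. For any fixed point `L` of the level operator, the infimum `m` of `L` over `S`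
then satisfies `L e ≥ 1 + m` for every `e ∈ S`, hence `1 + m ≤ m` in `ℕ∞`, which forces `m = ⊤`.
-/

def IsTautClosed (G : SimpleGraph V) (taut : V → Sym2 V → Sym2 V → Prop)
    (S : Set (Sym2 V)) : Prop :=
  S ⊆ G.edgeSet ∧ ∀ e ∈ S, ∀ v ∈ e, ∃ f ∈ S, v ∈ f ∧ taut v e f

theorem ENat.eq_top_of_one_add_le {m : ℕ∞} (h : 1 + m ≤ m) : m = ⊤ := by
  by_contra hm
  rw [add_comm, ENat.add_one_le_iff hm] at h
  exact lt_irrefl m h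

theorem one_add_le_levelOp {G : SimpleGraph V} {taut : V → Sym2 V → Sym2 V → Prop}
    {L : Sym2 V → ℕ∞} {e : Sym2 V} {m : ℕ∞}
    (h : ∀ v ∈ e, ∃ f ∈ G.edgeSet, v ∈ f ∧ taut v e f ∧ m ≤ L f) :
    1 + m ≤ levelOp G taut L e := by
  refine add_le_add_right (le_iInf₂ fun v hv => ?_) 1
  obtain ⟨f, hfG, hvf, hvef, hmf⟩ := h v hv
  exact hmf.trans (le_sSup ⟨f, hfG, hvf, hvef, rfl⟩)

theorem IsTautClosed.eq_top_of_forall_eq_levelOp {G : SimpleGraph V}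
    {taut : V → Sym2 V → Sym2 V → Prop} {S : Set (Sym2 V)} (hS : IsTautClosed G taut S)
    {L : Sym2 V → ℕ∞} (hfix : ∀ e ∈ G.edgeSet, L e = levelOp G taut L e) :
    ∀ e ∈ S, L e = ⊤ := by
  set m := ⨅ f ∈ S, L f
  have hstep : ∀ e ∈ S, 1 + m ≤ L e := fun e he => by
    rw [hfix e (hS.1 he)]
    refine one_add_le_levelOp fun v hv => ?_
    obtain ⟨f, hfS, hvf, hvef⟩ := hS.2 e he v hv
    exact ⟨f, hS.1 hfS, hvf, hvef, biInf_le L hfS⟩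
  have hm : m = ⊤ := ENat.eq_top_of_one_add_le (le_iInf₂ hstep)
  exact fun e he => eq_top_iff.mpr (hm ▸ biInf_le L he)

theorem isTautClosed_range_of_periodic {G : SimpleGraph V}
    {taut : V → Sym2 V → Sym2 V → Prop} (taut_symm : ∀ v e f, taut v e f → taut v f e)
    {n : ℕ} (hn : 0 < n) {q : ℕ → V} (hper : Function.Periodic q n)
    (hadj : ∀ i, G.Adj (q i) (q (i + 1)))
    (htaut : ∀ i, taut (q (i + 1)) s(q i, q (i + 1)) s(q (i + 1), q (i + 2))) :
    IsTautClosed G taut (Set.range fun i => s(q i, q (i + 1))) := by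
  refine ⟨Set.range_subset_iff.mpr hadj, ?_⟩
  rintro _ ⟨i, rfl⟩ v hv
  rcases Sym2.mem_iff.mp hv with rfl | rfl
  · -- the edge preceding edge `i` is edge `i + n - 1`, since `i - 1` may not exist in `ℕ`
    set k := i + n - 1
    have hk₁ : q (k + 1) = q i := by rw [show k + 1 = i + n by omega, hper]
    have hk₂ : q (k + 2) = q (i + 1) := by rw [show k + 2 = i + 1 + n by omega, hper]
    have hturn := htaut k
    rw [hk₁, hk₂] at hturn
    exact ⟨s(q k, q i), ⟨k, congrArg _ hk₁⟩, Sym2.mem_mk_right _ _, taut_symm _ _ _ hturn⟩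
  · exact ⟨_, ⟨i + 1, rfl⟩, Sym2.mem_mk_left _ _, htaut i⟩

theorem level_top_of_mem_taut_cycle_general
    (G : SimpleGraph V)
    (taut : V → Sym2 V → Sym2 V → Prop)
    (taut_symm : ∀ v e f, taut v e f → taut v f e)
    (L : Sym2 V → ℕ∞) (hL : IsEdgeLevel G taut L)
    (n : ℕ) (hn : 2 ≤ n) (q : ℕ → V)
    (hper : ∀ i, q (i + n) = q i)
    (hadj : ∀ i, G.Adj (q i) (q (i + 1)))
    (htaut : ∀ i, taut (q (i + 1)) s(q i, q (i + 1)) s(q (i + 1), q (i + 2)))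
    (e : Sym2 V) (he : ∃ j, e = s(q j, q (j + 1))) :
    L e = ⊤ := by
  obtain ⟨j, rfl⟩ := he
  have hcycle := isTautClosed_range_of_periodic taut_symm (by omega) hper hadj htaut
  exact hcycle.eq_top_of_forall_eq_levelOp hL.1 _ ⟨j, rfl⟩

/-- If an edge lies on a taut cycle (a closed walk `q 0 q 1 ⋯ q n`, `n ≥ 2`,
`q n = q 0`, represented here by an `n`-periodic sequence, such that at each vertex the
pair of incident cycle edges is taut), then it is a level-W edge: `L e = ∞`. -/
theorem level_top_of_mem_taut_cycle
    [Fintype V] (G : SimpleGraph V)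
    (taut : V → Sym2 V → Sym2 V → Prop)
    (taut_symm : ∀ v e f, taut v e f → taut v f e)
    (L : Sym2 V → ℕ∞) (hL : IsEdgeLevel G taut L)
    (n : ℕ) (hn : 2 ≤ n) (q : ℕ → V)
    (hper : ∀ i, q (i + n) = q i)
    (hadj : ∀ i, G.Adj (q i) (q (i + 1)))
    (htaut : ∀ i, taut (q (i + 1)) s(q i, q (i + 1)) s(q (i + 1), q (i + 2)))
    (e : Sym2 V) (he : ∃ j, e = s(q j, q (j + 1))) :
    L e = ⊤ :=
  level_top_of_mem_taut_cycle_general G taut taut_symm L hL n hn q hper hadj htaut e he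
end
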